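/- arXiv:2603.11491 — 11 statements merged into one kernel-verified Lean document; each statement's English description precedes it below -/
import Mathlib

section
/- Let d ≥ 2 and let G₁ = y · Σ_{i=0}^{d-2} (-1)^i (i+1) x^{d-2-i} y^i in ℚ[x,y]. Then (x+y)²·G₁ ∈ (x^d, y^d), i.e. G₁ belongs to the colon ideal (x^d, y^d) : (x+y)². -/
/-!
Since `1 / (1 + t)² = ∑ (-1)ⁱ (i + 1) tⁱ`, the truncated sum `S = ∑_{i ≤ n} (-1)ⁱ (i + 1) xⁿ⁻ⁱ yⁱ`
satisfies `(x + y)² S = xⁿ⁺² + (-1)ⁿ ((n + 2) x + (n + 1) y) yⁿ⁺¹`: all middle terms cancel.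
With `n = d - 2`, multiplying by `y` gives `(x + y)² G₁ = y xᵈ + (-1)ᵈ (d x + (d - 1) y) yᵈ ∈ (xᵈ, yᵈ)`.
-/

open MvPolynomial Finset

section

variable {R : Type*} [CommRing R]

lemma sum_range_succ_alternating_mul_pow (x y : R) (n : ℕ) :
    ∑ i ∈ range (n + 2), (-1) ^ i * (i + 1 : R) * x ^ (n + 1 - i) * y ^ i
      = x * ∑ i ∈ range (n + 1), (-1) ^ i * (i + 1 : R) * x ^ (n - i) * y ^ i
        + (-1) ^ (n + 1) * (n + 2 : R) * y ^ (n + 1) := by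
  rw [sum_range_succ, mul_sum, Nat.sub_self, pow_zero]
  congr 1
  · refine sum_congr rfl fun i hi => ?_
    rw [Nat.sub_add_comm (mem_range_succ_iff.mp hi), pow_succ]
    ring
  · push_cast
    ring

lemma add_sq_mul_sum_alternating_mul_pow (x y : R) (n : ℕ) :
    (x + y) ^ 2 * ∑ i ∈ range (n + 1), (-1) ^ i * (i + 1 : R) * x ^ (n - i) * y ^ i
      = x ^ (n + 2) + (-1) ^ n * ((n + 2) * x + (n + 1) * y) * y ^ (n + 1) := by
  induction n with
  | zero =>
    simp only [zero_add, range_one, zero_tsub, pow_zero, mul_one, sum_singleton, Nat.cast_zero,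
      one_mul, pow_one]
    ring
  | succ n ih =>
    rw [sum_range_succ_alternating_mul_pow, mul_add, mul_left_comm, ih]
    push_cast
    ring

end

theorem stmt_1_general (d : ℕ) :
    let x : MvPolynomial (Fin 2) ℚ := X 0
    let y : MvPolynomial (Fin 2) ℚ := X 1
    let G₁ : MvPolynomial (Fin 2) ℚ :=
      y * ∑ i ∈ range (d - 1), C ((-1 : ℚ) ^ i * (i + 1)) * x ^ (d - 2 - i) * y ^ i
    (x + y) ^ 2 * G₁ ∈ Ideal.span {x ^ d, y ^ d} := by
  intro x y G₁
  obtain _ | _ | n := d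
  · simp [G₁]
  · simp [G₁]
  have hG₁ : G₁ = y * ∑ i ∈ range (n + 1), (-1) ^ i * (i + 1 : MvPolynomial (Fin 2) ℚ)
      * x ^ (n - i) * y ^ i := by
    simp [G₁]
  rw [Ideal.mem_span_pair, hG₁, mul_left_comm, add_sq_mul_sum_alternating_mul_pow]
  exact ⟨y, (-1) ^ n * ((n + 2) * x + (n + 1) * y), by ring⟩

theorem stmt_1 (d : ℕ) (hd : 2 ≤ d) :
    let x : MvPolynomial (Fin 2) ℚ := X 0
    let y : MvPolynomial (Fin 2) ℚ := X 1
    let G₁ : MvPolynomial (Fin 2) ℚ :=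
      y * ∑ i ∈ range (d - 1), C ((-1 : ℚ) ^ i * (i + 1)) * x ^ (d - 2 - i) * y ^ i
    (x + y) ^ 2 * G₁ ∈ Ideal.span {x ^ d, y ^ d} :=
  stmt_1_general d
end

section
/- Let d ≥ 2 and let G₂ = Σ_{i=0}^{d} (-1)^i (i-1) x^{d-i} y^i in ℚ[x,y]. Then (x+y)²·G₂ ∈ (x^d, y^d). -/
open MvPolynomial Finset

/- Multiplying by `x + y` telescopes an alternating sum `∑ (-1)^i c_i x^(d-i) y^i` into one whose
inner coefficients are the differences `c_i - c_(i-1)`. For `c_i = i - 1` two such steps leave only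
boundary terms, a multiple of `x^d` plus a multiple of `y^d`; the explicit identity is proved by
induction on `d`. -/

section CommRing

variable {R : Type*} [CommRing R]

theorem sum_range_succ_mul_pow_sub_mul_pow (c : ℕ → R) (x y : R) (d : ℕ) :
    ∑ i ∈ range (d + 2), c i * x ^ (d + 1 - i) * y ^ i =
      x * ∑ i ∈ range (d + 1), c i * x ^ (d - i) * y ^ i + c (d + 1) * y ^ (d + 1) := by
  rw [sum_range_succ, Nat.sub_self, pow_zero, mul_one, mul_sum]
  congr 1
  refine sum_congr rfl fun i hi => ?_
  rw [Nat.sub_add_comm (mem_range_succ_iff.mp hi), pow_succ]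
  ring

theorem add_sq_mul_sum_neg_one_pow_mul_sub_one (x y : R) (d : ℕ) :
    (x + y) ^ 2 * ∑ i ∈ range (d + 1), (-1) ^ i * ((i : R) - 1) * x ^ (d - i) * y ^ i =
      -(x ^ 2 + 2 * x * y) * x ^ d + (-1) ^ d * (d * x * y + (d - 1) * y ^ 2) * y ^ d := by
  induction d with
  | zero => simp; ring
  | succ d ih =>
    rw [sum_range_succ_mul_pow_sub_mul_pow, mul_add, mul_left_comm, ih]
    push_cast
    ring

end CommRing

theorem stmt_2_general (d : ℕ) :
    let x : MvPolynomial (Fin 2) ℚ := X 0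
    let y : MvPolynomial (Fin 2) ℚ := X 1
    let G₂ : MvPolynomial (Fin 2) ℚ :=
      ∑ i ∈ range (d + 1), C ((-1 : ℚ) ^ i * ((i : ℚ) - 1)) * x ^ (d - i) * y ^ i
    (x + y) ^ 2 * G₂ ∈ Ideal.span {x ^ d, y ^ d} := by
  intro x y G₂
  have hG : G₂ = ∑ i ∈ range (d + 1),
      (-1) ^ i * ((i : MvPolynomial (Fin 2) ℚ) - 1) * x ^ (d - i) * y ^ i := by
    simp only [G₂, map_mul, map_pow, map_neg, map_one, map_sub, map_natCast]
  rw [Ideal.mem_span_pair, hG, add_sq_mul_sum_neg_one_pow_mul_sub_one]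
  exact ⟨_, _, rfl⟩

theorem stmt_2 (d : ℕ) (hd : 2 ≤ d) :
    let x : MvPolynomial (Fin 2) ℚ := X 0
    let y : MvPolynomial (Fin 2) ℚ := X 1
    let G₂ : MvPolynomial (Fin 2) ℚ :=
      ∑ i ∈ range (d + 1), C ((-1 : ℚ) ^ i * ((i : ℚ) - 1)) * x ^ (d - i) * y ^ i
    (x + y) ^ 2 * G₂ ∈ Ideal.span {x ^ d, y ^ d} :=
  stmt_2_general d
end

section
/- Let P = ℚ[x,y] and I a homogeneous ideal with a minimal free resolution 0 → P² →φ₂ P³ →φ₁ P → P/I → 0, where φ₁ = [x^{d₁}, y^{d₂}, (x+y)^a] and the third row of φ₂ has entries Q₁, Q₂. Then the colon ideal (x^{d₁}, y^{d₂}) : (x+y)^a equals the ideal (Q₁, Q₂), and deg Q₁ + deg Q₂ = d₁ + d₂ − a. -/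
/-!
If `g (x+y)^a = u x^{d₁} + v y^{d₂}`, then `(-u, -v, g)` is a syzygy, hence by exactness a
combination of the columns of `φ₂`, so `g ∈ (Q₁, Q₂)`; conversely the columns are syzygies.

For the degrees, the Koszul syzygies show that the `2 × 2` minor of `φ₂` omitting row `i` divides
the square of the `i`-th generator. As `x` and `y` are prime, the minors omitting the first two rows
are `c x^k` and `c' y^l`, and the relation `x^{d₁} (c' y^l) + y^{d₂} (c x^k) = 0` coming from the
two column syzygies forces `k = d₁`. On the other hand homogeneity of the columns gives
`deg (y^{d₂} (x+y)^a (c x^k)) = (a + q₁) + (a + q₂)`, whence `q₁ + q₂ = d₁ + d₂ - a`.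
-/

open MvPolynomial
open scoped Matrix

section SyzygyBasis

variable {R : Type*} [CommRing R]

def IsSyzygyBasis {ι κ : Type*} [Fintype ι] [Fintype κ] (g : ι → R) (φ : Matrix ι κ R) : Prop :=
  g ᵥ* φ = 0 ∧ ∀ v : ι → R, g ⬝ᵥ v = 0 → ∃ c : κ → R, φ *ᵥ c = v

theorem vecMul_fin_three_apply (g : Fin 3 → R) {κ : Type*} (φ : Matrix (Fin 3) κ R) (j : κ) :
    (g ᵥ* φ) j = g 0 * φ 0 j + g 1 * φ 1 j + g 2 * φ 2 j :=
  Matrix.vec3_dotProduct _ _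

theorem mulVec_fin_two_apply {ι : Type*} (φ : Matrix ι (Fin 2) R) (c : Fin 2 → R) (i : ι) :
    (φ *ᵥ c) i = φ i 0 * c 0 + φ i 1 * c 1 :=
  Matrix.vec2_dotProduct _ _

theorem add_mul_minor_eq_zero {g : Fin 3 → R} {φ : Matrix (Fin 3) (Fin 2) R} (h : g ᵥ* φ = 0) :
    g 0 * (φ 0 0 * φ 2 1 - φ 0 1 * φ 2 0) + g 1 * (φ 1 0 * φ 2 1 - φ 1 1 * φ 2 0) = 0 := by
  have h₀ := vecMul_fin_three_apply g φ 0
  have h₁ := vecMul_fin_three_apply g φ 1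
  rw [h, Pi.zero_apply] at h₀ h₁
  linear_combination φ 2 0 * h₁ - φ 2 1 * h₀

namespace IsSyzygyBasis

theorem mul_mem_span_pair_iff {g : Fin 3 → R} {φ : Matrix (Fin 3) (Fin 2) R}
    (h : IsSyzygyBasis g φ) (x : R) :
    x * g 2 ∈ Ideal.span {g 0, g 1} ↔ x ∈ Ideal.span {φ 2 0, φ 2 1} := by
  have col (j : Fin 2) : g 0 * φ 0 j + g 1 * φ 1 j + g 2 * φ 2 j = 0 := by
    rw [← vecMul_fin_three_apply, h.1, Pi.zero_apply]
  simp only [Ideal.mem_span_pair]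
  constructor
  · rintro ⟨a, b, hab⟩
    obtain ⟨c, hc⟩ := h.2 ![-a, -b, x] (by
      rw [Matrix.vec3_dotProduct]
      simp only [Matrix.cons_val_zero, Matrix.cons_val_one, Matrix.cons_val_two, Matrix.tail_cons,
        Matrix.head_cons]
      linear_combination -hab)
    have hc₂ := (mulVec_fin_two_apply φ c 2).symm.trans (congrFun hc 2)
    exact ⟨c 0, c 1, by simpa [mul_comm] using hc₂⟩
  · rintro ⟨a, b, hab⟩
    refine ⟨-(a * φ 0 0 + b * φ 0 1), -(a * φ 1 0 + b * φ 1 1), ?_⟩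
    linear_combination -a * col 0 - b * col 1 + g 2 * hab

theorem dvd_sq {ι : Type*} [Fintype ι] [DecidableEq ι] {g : ι → R} {φ : Matrix ι (Fin 2) R}
    (h : IsSyzygyBasis g φ) {i k l : ι} (hki : k ≠ i) (hli : l ≠ i) (hkl : k ≠ l) :
    φ k 0 * φ l 1 - φ k 1 * φ l 0 ∣ g i ^ 2 := by
  -- the Koszul syzygies `g k • eᵢ - g i • eₖ` and `g l • eᵢ - g i • eₗ` are combinations of the
  -- columns; the resulting 2 × 2 matrix identity has determinant `g i ^ 2`
  have koszul (m : ι) : ∃ c : Fin 2 → R, φ *ᵥ c = Pi.single i (g m) - Pi.single m (g i) :=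
    h.2 _ (by simp only [dotProduct_sub, dotProduct_single, mul_comm, sub_self])
  obtain ⟨c, hc⟩ := koszul k
  obtain ⟨d, hd⟩ := koszul l
  have hck := congrFun hc k
  have hcl := congrFun hc l
  have hdk := congrFun hd k
  have hdl := congrFun hd l
  simp only [mulVec_fin_two_apply, Pi.sub_apply, Pi.single_apply, hki, hli, hkl, hkl.symm,
    if_true, if_false] at hck hcl hdk hdl
  exact ⟨c 0 * d 1 - c 1 * d 0, by linear_combination -(φ l 0 * d 0 + φ l 1 * d 1) * hck
    + (φ l 0 * c 0 + φ l 1 * c 1) * hdk + g i * hdl⟩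

end IsSyzygyBasis

end SyzygyBasis

namespace MvPolynomial

variable {σ R : Type*}

theorem IsHomogeneous.of_add_add_eq_zero [CommSemiring R] {p q r : MvPolynomial σ R} {m k n : ℕ}
    (hp : p.IsHomogeneous m) (hq : q.IsHomogeneous k) (hr : r.IsHomogeneous n) (hr0 : r ≠ 0)
    (h : p + q + r = 0) : p.IsHomogeneous n := by
  by_cases hmn : m = n
  · exact hmn ▸ hp
  have hcomp := congrArg (homogeneousComponent n) h
  rw [map_add, map_add, homogeneousComponent_of_mem hp, if_neg (Ne.symm hmn), zero_add,
    homogeneousComponent_eq_self hr, map_zero] at hcomp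
  -- `r` must be cancelled in degree `n` by `q`, which leaves nothing to cancel `p`
  have hkn : k = n := by
    by_contra hkn
    rw [homogeneousComponent_of_mem hq, if_neg (Ne.symm hkn), zero_add] at hcomp
    exact hr0 hcomp
  subst hkn
  rw [homogeneousComponent_eq_self hq] at hcomp
  rw [add_assoc, hcomp, add_zero] at h
  exact h ▸ isHomogeneous_zero σ R k

theorem exists_eq_C_mul_X_pow_of_dvd_X_pow [CommRing R] [IsDomain R] {p : MvPolynomial σ R}
    {i : σ} {n : ℕ} (h : p ∣ X i ^ n) : ∃ c : R, ∃ k : ℕ, IsUnit c ∧ p = C c * X i ^ k := by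
  obtain ⟨k, -, u, hu⟩ := (dvd_prime_pow X_prime n).mp h
  obtain ⟨c, hc, hcu⟩ := isUnit_iff_eq_C_of_isReduced.mp (u⁻¹).isUnit
  refine ⟨c, k, hc, ?_⟩
  rw [← hcu, ← hu, mul_comm, Units.mul_inv_cancel_right]

theorem C_mul_X_pow_mul_X_pow_eq_monomial [CommSemiring R] (c : R) (i j : σ) (m n : ℕ) :
    C c * X i ^ m * X j ^ n = monomial (Finsupp.single i m + Finsupp.single j n) c := by
  rw [X_pow_eq_monomial, X_pow_eq_monomial, C_mul_monomial, monomial_mul, mul_one, mul_one]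

theorem eq_of_C_mul_X_pow_mul_X_pow_eq [CommSemiring R] {i j : σ} (hij : i ≠ j) {c c' : R}
    (hc : c ≠ 0) {m n m' n' : ℕ} (h : C c * X i ^ m * X j ^ n = C c' * X i ^ m' * X j ^ n') :
    m = m' := by
  rw [C_mul_X_pow_mul_X_pow_eq_monomial, C_mul_X_pow_mul_X_pow_eq_monomial,
    monomial_eq_monomial_iff] at h
  rcases h with ⟨hexp, -⟩ | ⟨hc0, -⟩
  · simpa [Finsupp.single_apply, hij.symm] using DFunLike.congr_fun hexp i
  · exact absurd hc0 hc

theorem isHomogeneous_mul_mul_minor [CommRing R]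
    {g : Fin 3 → MvPolynomial σ R} {φ : Matrix (Fin 3) (Fin 2) (MvPolynomial σ R)}
    (hsyz : g ᵥ* φ = 0) {e : Fin 3 → ℕ} (hg : ∀ i, (g i).IsHomogeneous (e i))
    (hφ : ∀ i j, ∃ n, (φ i j).IsHomogeneous n) {q : Fin 2 → ℕ}
    (hq : ∀ j, (φ 2 j).IsHomogeneous (q j)) (hq0 : ∀ j, g 2 * φ 2 j ≠ 0) :
    (g 1 * g 2 * (φ 1 0 * φ 2 1 - φ 1 1 * φ 2 0)).IsHomogeneous (e 2 + q 0 + (e 2 + q 1)) := by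
  have hcol (j : Fin 2) : (g 1 * φ 1 j).IsHomogeneous (e 2 + q j) := by
    obtain ⟨n₀, hn₀⟩ := hφ 0 j
    obtain ⟨n₁, hn₁⟩ := hφ 1 j
    refine ((hg 1).mul hn₁).of_add_add_eq_zero ((hg 0).mul hn₀) ((hg 2).mul (hq j)) (hq0 j) ?_
    have hj := vecMul_fin_three_apply g φ j
    rw [hsyz, Pi.zero_apply] at hj
    linear_combination -hj
  have h₁ := (hcol 1).mul ((hg 2).mul (hq 0))
  rw [add_comm] at h₁
  convert ((hcol 0).mul ((hg 2).mul (hq 1))).sub h₁ using 1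
  ring

end MvPolynomial

theorem stmt_4_general (d₁ d₂ a : ℕ)
    (φ₂ : Matrix (Fin 3) (Fin 2) (MvPolynomial (Fin 2) ℚ))
    (gens : Fin 3 → MvPolynomial (Fin 2) ℚ)
    (hgens : gens = ![(X 0 : MvPolynomial (Fin 2) ℚ) ^ d₁, (X 1) ^ d₂, (X 0 + X 1) ^ a])
    -- the columns of φ₂ are syzygies of the generators
    (hsyz : ∀ j : Fin 2, ∑ i : Fin 3, gens i * φ₂ i j = 0)
    -- every syzygy is a P-combination of the columns of φ₂ (exactness of the resolution)
    (hexact : ∀ v : Fin 3 → MvPolynomial (Fin 2) ℚ,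
      (∑ i : Fin 3, gens i * v i = 0) →
      ∃ c : Fin 2 → MvPolynomial (Fin 2) ℚ, ∀ i, v i = ∑ j : Fin 2, φ₂ i j * c j)
    (q₁ q₂ : ℕ)
    (hQ₁ : MvPolynomial.IsHomogeneous (φ₂ 2 0) q₁)
    (hQ₂ : MvPolynomial.IsHomogeneous (φ₂ 2 1) q₂)
    (hQ₁0 : φ₂ 2 0 ≠ 0) (hQ₂0 : φ₂ 2 1 ≠ 0)
    -- homogeneity of the matrix entries
    (hhom : ∀ i : Fin 3, ∀ j : Fin 2, ∃ e : ℕ, MvPolynomial.IsHomogeneous (φ₂ i j) e) :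
    (∀ g : MvPolynomial (Fin 2) ℚ,
      g * (X 0 + X 1) ^ a ∈ Ideal.span {(X 0 : MvPolynomial (Fin 2) ℚ) ^ d₁, (X 1) ^ d₂}
        ↔ g ∈ Ideal.span {φ₂ 2 0, φ₂ 2 1}) ∧
    q₁ + q₂ = d₁ + d₂ - a := by
  subst hgens
  have hB : IsSyzygyBasis ![(X 0 : MvPolynomial (Fin 2) ℚ) ^ d₁, X 1 ^ d₂, (X 0 + X 1) ^ a] φ₂ :=
    ⟨funext hsyz, fun v hv => (hexact v hv).imp fun _ hc => funext fun i => (hc i).symm⟩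
  refine ⟨hB.mul_mem_span_pair_iff, ?_⟩
  obtain ⟨c₀, k₀, hc₀, hM₀⟩ := exists_eq_C_mul_X_pow_of_dvd_X_pow
    ((hB.dvd_sq (i := 0) (k := 1) (l := 2) (by decide) (by decide) (by decide)).trans
      (pow_mul (X 0) d₁ 2).symm.dvd)
  obtain ⟨c₁, k₁, -, hM₁⟩ := exists_eq_C_mul_X_pow_of_dvd_X_pow
    ((hB.dvd_sq (i := 1) (k := 0) (l := 2) (by decide) (by decide) (by decide)).trans
      (pow_mul (X 1) d₂ 2).symm.dvd)
  have hk₀ : k₀ = d₁ := by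
    have hrel := add_mul_minor_eq_zero hB.1
    simp only [Matrix.cons_val_zero, Matrix.cons_val_one, hM₀, hM₁] at hrel
    have hmon : C c₀ * (X 0 : MvPolynomial (Fin 2) ℚ) ^ k₀ * X 1 ^ d₂
        = C (-c₁) * X 0 ^ d₁ * X 1 ^ k₁ := by
      rw [map_neg]
      linear_combination hrel
    exact eq_of_C_mul_X_pow_mul_X_pow_eq (by decide) hc₀.ne_zero hmon
  have hW : ((X 0 + X 1 : MvPolynomial (Fin 2) ℚ) ^ a).IsHomogeneous a := by
    simpa using ((isHomogeneous_X ℚ 0).add (isHomogeneous_X ℚ 1)).pow a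
  have hW0 : (X 0 + X 1 : MvPolynomial (Fin 2) ℚ) ^ a ≠ 0 :=
    pow_ne_zero a fun h => by simpa using congrArg (eval 1) h
  have hdeg := isHomogeneous_mul_mul_minor hB.1 (e := ![d₁, d₂, a])
    (fun i => by fin_cases i; exacts [isHomogeneous_X_pow 0 d₁, isHomogeneous_X_pow 1 d₂, hW])
    hhom (q := ![q₁, q₂]) (Fin.forall_fin_two.2 ⟨hQ₁, hQ₂⟩)
    (Fin.forall_fin_two.2 ⟨mul_ne_zero hW0 hQ₁0, mul_ne_zero hW0 hQ₂0⟩)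
  rw [hM₀] at hdeg
  have hdeg_eq : d₂ + a + k₀ = a + q₁ + (a + q₂) :=
    (((isHomogeneous_X_pow 1 d₂).mul hW).mul (isHomogeneous_C_mul_X_pow c₀ 0 k₀)).inj_right hdeg
      (by simp [hW0, hc₀.ne_zero])
  omega

/-- Hilbert–Burch setting for `I = (x^{d₁}, y^{d₂}, (x+y)^a)` in `ℚ[x,y]`:
the colon ideal `(x^{d₁}, y^{d₂}) : (x+y)^a` is generated by the entries `Q₁, Q₂`
of the last row of the syzygy matrix `φ₂`, and `deg Q₁ + deg Q₂ = d₁ + d₂ - a`. -/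
theorem stmt_4 (d₁ d₂ a : ℕ) (hd₁ : 2 ≤ d₁) (hd₂ : 2 ≤ d₂)
    (ha : 1 ≤ a) (ha' : a ≤ d₁ + d₂ - 2)
    (φ₂ : Matrix (Fin 3) (Fin 2) (MvPolynomial (Fin 2) ℚ))
    (gens : Fin 3 → MvPolynomial (Fin 2) ℚ)
    (hgens : gens = ![(X 0 : MvPolynomial (Fin 2) ℚ) ^ d₁, (X 1) ^ d₂, (X 0 + X 1) ^ a])
    -- the columns of φ₂ are syzygies of the generators
    (hsyz : ∀ j : Fin 2, ∑ i : Fin 3, gens i * φ₂ i j = 0)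
    -- every syzygy is a P-combination of the columns of φ₂ (exactness of the resolution)
    (hexact : ∀ v : Fin 3 → MvPolynomial (Fin 2) ℚ,
      (∑ i : Fin 3, gens i * v i = 0) →
      ∃ c : Fin 2 → MvPolynomial (Fin 2) ℚ, ∀ i, v i = ∑ j : Fin 2, φ₂ i j * c j)
    (q₁ q₂ : ℕ)
    (hQ₁ : MvPolynomial.IsHomogeneous (φ₂ 2 0) q₁)
    (hQ₂ : MvPolynomial.IsHomogeneous (φ₂ 2 1) q₂)
    (hQ₁0 : φ₂ 2 0 ≠ 0) (hQ₂0 : φ₂ 2 1 ≠ 0)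
    -- homogeneity of the matrix entries
    (hhom : ∀ i : Fin 3, ∀ j : Fin 2, ∃ e : ℕ, MvPolynomial.IsHomogeneous (φ₂ i j) e) :
    (∀ g : MvPolynomial (Fin 2) ℚ,
      g * (X 0 + X 1) ^ a ∈ Ideal.span {(X 0 : MvPolynomial (Fin 2) ℚ) ^ d₁, (X 1) ^ d₂}
        ↔ g ∈ Ideal.span {φ₂ 2 0, φ₂ 2 1}) ∧
    q₁ + q₂ = d₁ + d₂ - a :=
  stmt_4_general d₁ d₂ a φ₂ gens hgens hsyz hexact q₁ q₂ hQ₁ hQ₂ hQ₁0 hQ₂0 hhom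
end

section
/- Let HF(t) = #{(i,j) ∈ ℕ² : i + j = t, i < d₁, j < d₂} be the Hilbert function of ℚ[x,y]/(x^{d₁}, y^{d₂}), where 2 ≤ d₁ ≤ d₂ and k = d₂ − d₁, and fix a ≥ 1. If a ≤ k, then the least t ≥ 0 with HF(t) > HF(t + a) is t = d₂ − a; if a ≥ k + 1, the least such t is t = d₂ − ⌈(a+k)/2⌉. -/
/-!
In degree `t` the monomials `xⁱyʲ` with `i + j = t`, `i < d₁`, `j < d₂` are indexed by
`t + 1 - d₂ ≤ i < min d₁ (t + 1)`, so `HF` rises by one up to `d₁ - 1`, stays at `d₁` until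
`d₂ - 1` and then falls by one down to `0` at `d₁ + d₂ - 1`. For such a unimodal function the
drops `HF (t + a) < HF t` happen on an interval of `t` ending at `d₁ + d₂ - 2`; it starts where
`t + a` first leaves the plateau (`t = d₂ - a`) or, if `a` is longer than the plateau, where the
falling value at `t + a` first undercuts the rising value at `t` (`t = d₂ - ⌈(a + k)/2⌉`).
-/

open Finset

def rectHilbertFunction (d₁ d₂ t : ℕ) : ℕ :=
  #{p ∈ range d₁ ×ˢ range d₂ | p.1 + p.2 = t}

theorem rectHilbertFunction_eq (d₁ d₂ t : ℕ) :
    rectHilbertFunction d₁ d₂ t = min d₁ (t + 1) - (t + 1 - d₂) := by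
  have hmonomials : {p ∈ range d₁ ×ˢ range d₂ | p.1 + p.2 = t}
      = (Ico (t + 1 - d₂) (min d₁ (t + 1))).image (fun i => (i, t - i)) := by
    ext ⟨i, j⟩
    simp only [mem_filter, mem_product, mem_range, mem_image, mem_Ico, Prod.mk.injEq]
    constructor
    · rintro ⟨⟨hi, hj⟩, ht⟩
      exact ⟨i, by omega, rfl, by omega⟩
    · rintro ⟨i, hi, rfl, rfl⟩
      omega
  rw [rectHilbertFunction, hmonomials, card_image_of_injective _ fun i i' h => (Prod.mk.inj h).1,
    Nat.card_Ico]

theorem rectHilbertFunction_add_lt_iff {d₁ d₂ a : ℕ} (hd₁ : 1 ≤ d₁) (h12 : d₁ ≤ d₂) (ha : 1 ≤ a) (t : ℕ) :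
    rectHilbertFunction d₁ d₂ (t + a) < rectHilbertFunction d₁ d₂ t ↔
      d₂ - min a ((a + (d₂ - d₁) + 1) / 2) ≤ t ∧ t + 2 ≤ d₁ + d₂ := by
  rw [rectHilbertFunction_eq, rectHilbertFunction_eq]
  omega

theorem isLeast_rectHilbertFunction_add_lt {d₁ d₂ a : ℕ} (hd₁ : 1 ≤ d₁) (h12 : d₁ ≤ d₂)
    (ha : 1 ≤ a) :
    IsLeast {t | rectHilbertFunction d₁ d₂ (t + a) < rectHilbertFunction d₁ d₂ t}
      (d₂ - min a ((a + (d₂ - d₁) + 1) / 2)) := by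
  refine ⟨?_, fun t ht => ?_⟩
  · exact (rectHilbertFunction_add_lt_iff hd₁ h12 ha _).2 ⟨le_rfl, by omega⟩
  · exact ((rectHilbertFunction_add_lt_iff hd₁ h12 ha t).1 ht).1

theorem stmt_7 (d₁ d₂ a : ℕ) (hd₁ : 2 ≤ d₁) (h12 : d₁ ≤ d₂) (k : ℕ) (hk : k = d₂ - d₁)
    (ha : 1 ≤ a) :
    let HF : ℕ → ℕ := fun t =>
      ((range d₁ ×ˢ range d₂).filter (fun p => p.1 + p.2 = t)).card
    (a ≤ k → IsLeast {t : ℕ | HF (t + a) < HF t} (d₂ - a)) ∧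
    (k + 1 ≤ a → IsLeast {t : ℕ | HF (t + a) < HF t} (d₂ - (a + k + 1) / 2)) := by
  intro HF
  have hleast : IsLeast {t : ℕ | HF (t + a) < HF t} (d₂ - min a ((a + k + 1) / 2)) :=
    hk ▸ isLeast_rectHilbertFunction_add_lt (by omega) h12 ha
  refine ⟨fun hak => ?_, fun hak => ?_⟩
  · rwa [min_eq_left (by omega)] at hleast
  · rwa [min_eq_right (by omega)] at hleast
end

section
/- Let d ≥ 2, let a ≥ 2 be even, set b = a/2, and in ℚ[x,y] define F₁ = Σ_i (-1)^i binom(d-1-i, b) binom(b+i, b) x^{d-b-1-i} y^i, G₁ = y Σ_i (-1)^i binom(d-2-i, b-1) binom(b+i, b) x^{d-b-1-i} y^i, and G₂ = Σ_i (-1)^i binom(d-1-i, b-1) binom(b-1+i, b-1) (i−1) x^{d-b-i} y^i. Then b·(x+y)·F₁ = b(b+2−d)·G₁ + (b−d)·G₂. -/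
/-!
Both sides are binary forms of degree `d - b` (multiplying `F₁` by `x` stays inside the range
of summation because `C(b-1, b) = 0`), so the identity is a comparison of coefficients. The
coefficient of `x^(d-b)` reduces to the absorption identity
`b * C(d-1, b) = (d - b) * C(d-1, b-1)`. For the coefficient of `x^(d-b-1-j) y^(j+1)`, write
`b = k + 1` and `d = k + j + s + 2`: Pascal's rule removes the terms `C(k+s, k+1) C(k+j+1, k+1)`,
absorption turns what is left into multiples of `C(k+s, k) C(k+j+1, k)`, and both sides become
`(j + 1 - s)` times that product.
-/

open MvPolynomial Finset

section HomogeneousSum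

variable {R : Type*} [CommSemiring R] (x y : R)

theorem homogeneous_sum_range_succ (c : ℕ → R) (n : ℕ) :
    ∑ i ∈ range (n + 1), c i * x ^ (n - i) * y ^ i
      = c 0 * x ^ n + ∑ j ∈ range n, c (j + 1) * x ^ (n - 1 - j) * y ^ (j + 1) := by
  rw [sum_range_succ', add_comm]
  congr 1
  · simp
  · refine sum_congr rfl fun j _ => ?_
    rw [show n - (j + 1) = n - 1 - j by omega]

theorem add_mul_homogeneous_sum_range (c : ℕ → R) (n : ℕ) (hc : c n = 0) :
    (x + y) * ∑ i ∈ range n, c i * x ^ (n - 1 - i) * y ^ i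
      = c 0 * x ^ n + ∑ j ∈ range n, (c (j + 1) + c j) * x ^ (n - 1 - j) * y ^ (j + 1) := by
  have hx : x * ∑ i ∈ range n, c i * x ^ (n - 1 - i) * y ^ i
      = ∑ i ∈ range (n + 1), c i * x ^ (n - i) * y ^ i := by
    rw [sum_range_succ, hc, zero_mul, zero_mul, add_zero, mul_sum]
    refine sum_congr rfl fun i hi => ?_
    rw [show n - i = n - 1 - i + 1 by have := mem_range.1 hi; omega, pow_succ]
    ring
  rw [add_mul, hx, homogeneous_sum_range_succ, mul_sum, add_assoc, ← sum_add_distrib]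
  congr 1
  refine sum_congr rfl fun j _ => ?_
  ring

end HomogeneousSum

theorem Nat.add_choose_succ_mul (k s : ℕ) :
    (k + s).choose (k + 1) * (k + 1) = (k + s).choose k * s := by
  simpa using Nat.choose_succ_right_eq (k + s) k

theorem mul_choose_pred_eq {R : Type*} [CommRing R] (d b : ℕ) (hd : 1 ≤ d) (hb : 1 ≤ b) :
    (b : R) * (d - 1).choose b = ((d : R) - b) * (d - 1).choose (b - 1) := by
  rcases le_or_gt b d with hbd | hdb
  · obtain ⟨k, rfl⟩ : ∃ k, b = k + 1 := ⟨b - 1, by omega⟩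
    obtain ⟨s, rfl⟩ : ∃ s, d = k + 1 + s := ⟨d - (k + 1), by omega⟩
    have h : ((k + s).choose (k + 1) * (k + 1) : R) = (k + s).choose k * s := by
      exact_mod_cast congrArg (Nat.cast (R := R)) (Nat.add_choose_succ_mul k s)
    rw [show k + 1 + s - 1 = k + s by omega, Nat.add_sub_cancel]
    push_cast
    linear_combination h
  · rw [Nat.choose_eq_zero_of_lt (by omega : d - 1 < b),
      Nat.choose_eq_zero_of_lt (by omega : d - 1 < b - 1)]
    simp

theorem choose_coeff_succ_identity {R : Type*} [CommRing R] (d b j : ℕ) (hb : 1 ≤ b)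
    (hj : b + j + 1 ≤ d) :
    (b : R) * ((-1) ^ (j + 1) * (d - 1 - (j + 1)).choose b * (b + (j + 1)).choose b
        + (-1) ^ j * (d - 1 - j).choose b * (b + j).choose b)
      = b * (b + 2 - d) * ((-1) ^ j * (d - 2 - j).choose (b - 1) * (b + j).choose b)
        + (b - d) * ((-1) ^ (j + 1) * (d - 1 - (j + 1)).choose (b - 1)
          * (b - 1 + (j + 1)).choose (b - 1) * (((j + 1 : ℕ) : R) - 1)) := by
  obtain ⟨k, rfl⟩ : ∃ k, b = k + 1 := ⟨b - 1, by omega⟩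
  obtain ⟨s, rfl⟩ : ∃ s, d = k + j + s + 2 := ⟨d - (k + j + 2), by omega⟩
  rw [show k + j + s + 2 - 1 - (j + 1) = k + s by omega,
    show k + j + s + 2 - 1 - j = k + s + 1 by omega,
    show k + j + s + 2 - 2 - j = k + s by omega,
    show k + 1 - 1 + (j + 1) = k + j + 1 by omega, Nat.add_sub_cancel,
    show k + 1 + (j + 1) = k + j + 1 + 1 by omega,
    show k + 1 + j = k + j + 1 by omega,
    Nat.choose_succ_succ' (k + s), Nat.choose_succ_succ' (k + j + 1)]
  have hs : ((k + s).choose (k + 1) * (k + 1) : R) = (k + s).choose k * s := by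
    exact_mod_cast congrArg (Nat.cast (R := R)) (Nat.add_choose_succ_mul k s)
  have hj : ((k + j + 1).choose (k + 1) * (k + 1) : R) = (k + j + 1).choose k * (j + 1) := by
    exact_mod_cast congrArg (Nat.cast (R := R)) (Nat.add_choose_succ_mul k (j + 1))
  push_cast
  linear_combination (-1 : R) ^ j * ((j + s) * (k + s).choose k * hj - (k + j + 1).choose k * hs)

/-- The key inductive identity `b(x+y)F₁ = b(b+2-d)G₁ + (b-d)G₂` for even `a = 2b`. -/
theorem stmt_10 (d a b : ℕ) (hd : 2 ≤ d) (ha : 2 ≤ a) (hae : a = 2 * b) :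
    let x : MvPolynomial (Fin 2) ℚ := X 0
    let y : MvPolynomial (Fin 2) ℚ := X 1
    let F₁ : MvPolynomial (Fin 2) ℚ := ∑ i ∈ range (d - b),
      C ((-1 : ℚ) ^ i * (Nat.choose (d - 1 - i) b) * (Nat.choose (b + i) b))
        * x ^ (d - b - 1 - i) * y ^ i
    let G₁ : MvPolynomial (Fin 2) ℚ := y * ∑ i ∈ range (d - b),
      C ((-1 : ℚ) ^ i * (Nat.choose (d - 2 - i) (b - 1)) * (Nat.choose (b + i) b))
        * x ^ (d - b - 1 - i) * y ^ i
    let G₂ : MvPolynomial (Fin 2) ℚ := ∑ i ∈ range (d - b + 1),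
      C ((-1 : ℚ) ^ i * (Nat.choose (d - 1 - i) (b - 1)) * (Nat.choose (b - 1 + i) (b - 1))
          * ((i : ℚ) - 1))
        * x ^ (d - b - i) * y ^ i
    C (b : ℚ) * ((x + y) * F₁)
      = C ((b : ℚ) * ((b : ℚ) + 2 - d)) * G₁ + C ((b : ℚ) - d) * G₂ := by
  intro x y F₁ G₁ G₂
  dsimp only [F₁, G₁, G₂]
  have hb : 1 ≤ b := by omega
  have htop : (d - 1 - (d - b)).choose b = 0 := Nat.choose_eq_zero_of_lt (by omega)
  rw [add_mul_homogeneous_sum_range x y _ _ (by simp [htop]), homogeneous_sum_range_succ,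
    mul_add, mul_add, add_left_comm]
  congr 1
  · have h := congrArg (C (σ := Fin 2)) (mul_choose_pred_eq (R := ℚ) d b (by omega) hb)
    simp only [map_mul, map_sub, map_natCast] at h
    simp only [pow_zero, one_mul, Nat.sub_zero, add_zero, Nat.choose_self, Nat.cast_one,
      mul_one, Nat.cast_zero, zero_sub, map_mul, map_neg, map_one, map_natCast, map_sub]
    linear_combination x ^ (d - b) * h
  · rw [mul_sum, mul_sum, mul_sum, mul_sum, ← sum_add_distrib]
    refine sum_congr rfl fun j hj => ?_
    have hjd : b + j + 1 ≤ d := by have := mem_range.1 hj; omega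
    have h := congrArg (C (σ := Fin 2)) (choose_coeff_succ_identity (R := ℚ) d b j hb hjd)
    simp only [map_add, map_mul, map_sub] at h ⊢
    linear_combination x ^ (d - b - 1 - j) * y ^ (j + 1) * h
end

section
/- Let d₂ ≥ 2, a ≥ 1 odd, and n ≥ 0. Define F_{1,d₂,a,n} = Σ_i (-1)^i binom(d₂-1-i, (a-1)/2 + n) binom((a-1)/2 + i, (a-1)/2) x^{d₂ - (a+1)/2 - n - i} y^i. Then the n-th partial derivative of F_{1,d₂,a,0} with respect to x equals (∏_{j=1}^{n} ((a−1)/2 + j)) · F_{1,d₂,a,n}. -/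
open MvPolynomial Finset

theorem pderiv_C_mul_X_pow_mul_X_pow {R σ : Type*} [CommSemiring R] [DecidableEq σ] {i j : σ}
    (hij : i ≠ j) (c : R) (e k : ℕ) :
    pderiv i (C c * X i ^ e * X j ^ k) = C (c * e) * X i ^ (e - 1) * X j ^ k := by
  simp [pderiv_X, hij.symm]
  ring

section

variable (R : Type*) [CommRing R]

noncomputable def binomTerm (d b m i : ℕ) : MvPolynomial (Fin 2) R :=
  C ((-1 : R) ^ i * (Nat.choose (d - 1 - i) (b + m)) * (Nat.choose (b + i) b))
    * X 0 ^ (d - b - 1 - m - i) * X 1 ^ i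

/-- The polynomial `F_{1,d,a,m}` of the paper, for `a = 2b + 1`. -/
noncomputable def binomSum (d b m : ℕ) : MvPolynomial (Fin 2) R :=
  ∑ i ∈ range (d - b - m), binomTerm R d b m i

variable {R}

theorem binomTerm_eq_zero (d b m i : ℕ) (h : d - 1 - i < b + m) : binomTerm R d b m i = 0 := by
  simp [binomTerm, Nat.choose_eq_zero_of_lt h]

theorem pderiv_binomTerm (d b m i : ℕ) :
    pderiv 0 (binomTerm R d b m i) = C ((b : R) + m + 1) * binomTerm R d b (m + 1) i := by
  -- `choose n k * (n - k) = choose n (k + 1) * (k + 1)` for `n = d - 1 - i`, `k = b + m`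
  have hchoose : Nat.choose (d - 1 - i) (b + m) * (d - b - 1 - m - i)
      = Nat.choose (d - 1 - i) (b + (m + 1)) * (b + m + 1) := by
    rw [← add_assoc, Nat.choose_succ_right_eq]
    congr 1
    omega
  have hexp : d - b - 1 - m - i - 1 = d - b - 1 - (m + 1) - i := by omega
  rw [binomTerm, pderiv_C_mul_X_pow_mul_X_pow (by decide), hexp, binomTerm]
  have hcoeff := congrArg (Nat.cast : ℕ → R) hchoose
  push_cast at hcoeff
  rw [← mul_assoc, ← mul_assoc, ← C_mul]
  congr 3
  linear_combination ((-1 : R) ^ i * (Nat.choose (b + i) b)) * hcoeff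

theorem pderiv_binomSum (d b m : ℕ) :
    pderiv 0 (binomSum R d b m) = C ((b : R) + m + 1) * binomSum R d b (m + 1) := by
  simp only [binomSum, map_sum, pderiv_binomTerm, ← mul_sum]
  congr 1
  -- the extra summand `i = d - b - m - 1` carries the factor `choose (b + m) (b + m + 1) = 0`
  refine (sum_subset (range_mono (by omega)) fun i hi hi' => ?_).symm
  simp only [mem_range] at hi hi'
  exact binomTerm_eq_zero d b (m + 1) i (by omega)

theorem iterate_pderiv_binomSum (d b n : ℕ) :
    (pderiv 0)^[n] (binomSum R d b 0) = C (∏ j ∈ range n, ((b : R) + j + 1)) * binomSum R d b n := by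
  induction n with
  | zero => simp
  | succ n ih =>
    rw [Function.iterate_succ_apply', ih, pderiv_mul, pderiv_C, zero_mul, zero_add,
      pderiv_binomSum, prod_range_succ, C_mul]
    ring

end

theorem stmt_11_general (d₂ b n : ℕ) :
    let F : ℕ → MvPolynomial (Fin 2) ℚ := fun m => ∑ i ∈ range (d₂ - b - m),
      C ((-1 : ℚ) ^ i * (Nat.choose (d₂ - 1 - i) (b + m)) * (Nat.choose (b + i) b))
        * (X 0 : MvPolynomial (Fin 2) ℚ) ^ (d₂ - b - 1 - m - i) * (X 1) ^ i
    (MvPolynomial.pderiv (0 : Fin 2))^[n] (F 0)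
      = C (∏ j ∈ range n, ((b : ℚ) + j + 1)) * F n :=
  iterate_pderiv_binomSum d₂ b n

/-- The n-th x-partial derivative of `F_{1,d₂,a,0}` equals `(∏_{j=1}^n ((a-1)/2+j)) F_{1,d₂,a,n}`,
for odd `a = 2b+1`. -/
theorem stmt_11 (d₂ a b n : ℕ) (hd₂ : 2 ≤ d₂) (ha : 1 ≤ a) (hab : a = 2 * b + 1) :
    let F : ℕ → MvPolynomial (Fin 2) ℚ := fun m => ∑ i ∈ range (d₂ - b - m),
      C ((-1 : ℚ) ^ i * (Nat.choose (d₂ - 1 - i) (b + m)) * (Nat.choose (b + i) b))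
        * (X 0 : MvPolynomial (Fin 2) ℚ) ^ (d₂ - b - 1 - m - i) * (X 1) ^ i
    (MvPolynomial.pderiv (0 : Fin 2))^[n] (F 0)
      = C (∏ j ∈ range n, ((b : ℚ) + j + 1)) * F n :=
  stmt_11_general d₂ b n
end

section
/- Let P = ℚ[x,y], let 2 ≤ d₁ ≤ d₂, k = d₂ − d₁, and a > k. If f ∈ (x^{d₁+k}, y^{d₂}) : (x+y)^{a−k}, then for every 0 ≤ j ≤ k, the j-th partial derivative ∂^j f/∂x^j belongs to (x^{d₁+k−j}, y^{d₂}) : (x+y)^{a−k+j}. In particular ∂^k f/∂x^k ∈ (x^{d₁}, y^{d₂}) : (x+y)^a. -/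
/-!
Write `s = x + y`. If `g s^(e+1) = p x^(m+1) + q y^d`, differentiate with respect to `x`, multiply
by `s` and subtract `(e+1)` times the original relation: since `∂s/∂x = 1` and `∂y/∂x = 0`, what
is left expresses `(∂g/∂x) s^(e+2)` as a combination of `x^m` and `y^d`. Iterating `j` times trades
`j` powers of `x` for `j` powers of `x + y`.
-/

open MvPolynomial

namespace Derivation

variable {R A : Type*} [CommSemiring R] [CommRing A] [Algebra R A] (D : Derivation R A A)
  {x y s : A} {d : ℕ}

theorem mul_pow_succ_succ_mem_span_pair (hs : D s = 1) (hy : D y = 0) {g : A} {m e : ℕ}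
    (h : g * s ^ (e + 1) ∈ Ideal.span {x ^ (m + 1), y ^ d}) :
    D g * s ^ (e + 2) ∈ Ideal.span {x ^ m, y ^ d} := by
  rw [Ideal.mem_span_pair] at h ⊢
  obtain ⟨p, q, hpq⟩ := h
  have hD := congrArg D hpq
  simp only [leibniz, leibniz_pow, hs, hy, smul_eq_mul, nsmul_eq_mul, Nat.add_sub_cancel,
    mul_zero, map_add] at hD
  refine ⟨s * D p * x + (m + 1) * s * p * D x - (e + 1) * p * x,
    s * D q - (e + 1) * q, ?_⟩
  push_cast at hD
  linear_combination s * hD - ((e : A) + 1) * hpq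

theorem iterate_mul_pow_mem_span_pair (hs : D s = 1) (hy : D y = 0) {g : A} {e : ℕ} :
    ∀ {m : ℕ} (j : ℕ), g * s ^ (e + 1) ∈ Ideal.span {x ^ (m + j), y ^ d} →
      (⇑D)^[j] g * s ^ (e + 1 + j) ∈ Ideal.span {x ^ m, y ^ d}
  | _, 0, h => h
  | m, j + 1, h => by
    rw [Function.iterate_succ_apply', show e + 1 + (j + 1) = e + j + 2 by omega]
    refine D.mul_pow_succ_succ_mem_span_pair hs hy ?_
    rw [show e + j + 1 = e + 1 + j by omega]
    exact iterate_mul_pow_mem_span_pair hs hy j (by rwa [Nat.add_right_comm])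

end Derivation

theorem stmt_12_general (d₁ d₂ a k : ℕ) (ha : k < a) (f : MvPolynomial (Fin 2) ℚ)
    (hf : f * (X 0 + X 1) ^ (a - k)
      ∈ Ideal.span {(X 0 : MvPolynomial (Fin 2) ℚ) ^ (d₁ + k), (X 1) ^ d₂}) :
    (∀ j : ℕ, j ≤ k →
      (MvPolynomial.pderiv (0 : Fin 2))^[j] f * (X 0 + X 1) ^ (a - k + j)
        ∈ Ideal.span {(X 0 : MvPolynomial (Fin 2) ℚ) ^ (d₁ + k - j), (X 1) ^ d₂}) ∧
    (MvPolynomial.pderiv (0 : Fin 2))^[k] f * (X 0 + X 1) ^ a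
      ∈ Ideal.span {(X 0 : MvPolynomial (Fin 2) ℚ) ^ d₁, (X 1) ^ d₂} := by
  have hs : pderiv (0 : Fin 2) (X 0 + X 1 : MvPolynomial (Fin 2) ℚ) = 1 := by
    simp [pderiv_X]
  have hy : pderiv (0 : Fin 2) (X 1 : MvPolynomial (Fin 2) ℚ) = 0 := by
    simp [pderiv_X]
  have hak : a - k = a - k - 1 + 1 := by omega
  have main (j : ℕ) (hj : j ≤ k) : (pderiv (0 : Fin 2))^[j] f * (X 0 + X 1) ^ (a - k + j)
      ∈ Ideal.span {(X 0 : MvPolynomial (Fin 2) ℚ) ^ (d₁ + k - j), (X 1) ^ d₂} := by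
    rw [hak]
    refine Derivation.iterate_mul_pow_mem_span_pair (R := ℚ) (pderiv (0 : Fin 2))
      (x := X 0) hs hy (m := d₁ + k - j) j ?_
    rwa [Nat.sub_add_cancel (by omega : j ≤ d₁ + k), ← hak]
  refine ⟨main, ?_⟩
  have := main k le_rfl
  rwa [Nat.sub_add_cancel ha.le, Nat.add_sub_cancel] at this

theorem stmt_12 (d₁ d₂ a k : ℕ) (hd₁ : 2 ≤ d₁) (h12 : d₁ ≤ d₂) (hk : k = d₂ - d₁)
    (ha : k < a) (f : MvPolynomial (Fin 2) ℚ)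
    (hf : f * (X 0 + X 1) ^ (a - k)
      ∈ Ideal.span {(X 0 : MvPolynomial (Fin 2) ℚ) ^ (d₁ + k), (X 1) ^ d₂}) :
    (∀ j : ℕ, j ≤ k →
      (MvPolynomial.pderiv (0 : Fin 2))^[j] f * (X 0 + X 1) ^ (a - k + j)
        ∈ Ideal.span {(X 0 : MvPolynomial (Fin 2) ℚ) ^ (d₁ + k - j), (X 1) ^ d₂}) ∧
    (MvPolynomial.pderiv (0 : Fin 2))^[k] f * (X 0 + X 1) ^ a
      ∈ Ideal.span {(X 0 : MvPolynomial (Fin 2) ℚ) ^ d₁, (X 1) ^ d₂} :=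
  stmt_12_general d₁ d₂ a k ha f hf
end

section
/- Let 2 ≤ d₁ ≤ d₂, k = d₂ − d₁, and 1 ≤ a ≤ k. Then in ℚ[x,y], the colon ideal (x^{d₁}, y^{d₂}) : (x+y)^a is generated by x^{d₁} and H = y^{k−a+1} Σ_{i=0}^{d₁−1} (-1)^i binom(d₁+a−2−i, a−1) x^{d₁−1−i} y^i. -/
open MvPolynomial Finset

/-! Let `N` be `y ^ (n - 1)` times the truncation below `x`-degree `n = d₁` of the binomial
series of `(1 + x / y) ^ (-a)`. Then `(x + y) ^ a * N ≡ y ^ (n + a - 1) (mod x ^ n)` and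
`H = ± y ^ (k - a + 1) * N`. Multiplying a relation
`g (x + y) ^ a = u x ^ n + v y ^ (n + a - 1) y ^ (k - a + 1)` by `N` gives
`(g - v y ^ (k - a + 1) N) y ^ (n + a - 1) ≡ 0 (mod x ^ n)`, and `y` may be cancelled because `x`
is a prime not dividing `y`; the converse inclusion is the same congruence read backwards. -/

section InvPowTrunc

variable {R : Type*} [CommRing R]

/-- `y ^ (n - 1)` times the truncation below degree `n` of
`(1 + x / y) ^ (-(b + 1)) = ∑ j, (-1) ^ j * (b + j).choose b * (x / y) ^ j`. -/
def invPowTrunc (x y : R) (b n : ℕ) : R :=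
  ∑ j ∈ range n, (-1) ^ j * ((b + j).choose b : R) * x ^ j * y ^ (n - 1 - j)

lemma invPowTrunc_zero_right (x y : R) (b : ℕ) : invPowTrunc x y b 0 = 0 := by
  simp [invPowTrunc]

lemma invPowTrunc_succ_right (x y : R) (b n : ℕ) :
    invPowTrunc x y b (n + 1) =
      y * invPowTrunc x y b n + (-1) ^ n * ((b + n).choose b : R) * x ^ n := by
  rw [invPowTrunc, sum_range_succ, invPowTrunc, mul_sum, Nat.add_sub_cancel, Nat.sub_self, pow_zero,
    mul_one]
  congr 1
  refine sum_congr rfl fun j hj => ?_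
  rw [show n - j = n - 1 - j + 1 by have := mem_range.mp hj; omega, pow_succ]
  ring

lemma add_mul_invPowTrunc_zero (x y : R) (n : ℕ) :
    (x + y) * invPowTrunc x y 0 n = y ^ n - (-x) ^ n := by
  induction n with
  | zero => simp [invPowTrunc_zero_right]
  | succ n ih =>
    rw [invPowTrunc_succ_right, Nat.choose_zero_right, Nat.cast_one, neg_pow, neg_pow x (n + 1)]
    linear_combination y * ih

lemma add_mul_invPowTrunc_succ (x y : R) (b n : ℕ) :
    (x + y) * invPowTrunc x y (b + 1) n =
      y * invPowTrunc x y b n - (-1) ^ n * ((b + n).choose (b + 1) : R) * x ^ n := by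
  induction n with
  | zero => simp [invPowTrunc_zero_right]
  | succ n ih =>
    have pascal : ((b + n + 1).choose (b + 1) : R) = (b + n).choose b + (b + n).choose (b + 1) := by
      rw [Nat.choose_succ_succ, Nat.cast_add]
    rw [invPowTrunc_succ_right, invPowTrunc_succ_right, ← add_assoc b n 1, add_right_comm b 1 n]
    linear_combination y * ih + (-1) ^ n * x ^ n * y * pascal

lemma pow_dvd_add_pow_mul_invPowTrunc_sub (x y : R) (b n : ℕ) :
    x ^ n ∣ (x + y) ^ (b + 1) * invPowTrunc x y b n - y ^ (b + n) := by
  induction b with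
  | zero =>
    rw [zero_add, pow_one, add_mul_invPowTrunc_zero, neg_pow]
    exact ⟨-(-1) ^ n, by ring⟩
  | succ b ih =>
    obtain ⟨P, hP⟩ := ih
    refine ⟨y * P - (-1) ^ n * ((b + n).choose (b + 1) : R) * (x + y) ^ (b + 1), ?_⟩
    rw [pow_succ, mul_assoc, add_mul_invPowTrunc_succ, show b + 1 + n = b + n + 1 by omega]
    linear_combination y * hP

lemma sum_range_reflect_eq_invPowTrunc (x y : R) (b n : ℕ) :
    ∑ i ∈ range n, (-1) ^ i * ((n + b - 1 - i).choose b : R) * x ^ (n - 1 - i) * y ^ i =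
      (-1) ^ (n - 1) * invPowTrunc x y b n := by
  rw [invPowTrunc, mul_sum, ← sum_range_reflect]
  refine sum_congr rfl fun i hi => ?_
  have hi := mem_range.mp hi
  rw [show n + b - 1 - (n - 1 - i) = b + i by omega, show n - 1 - (n - 1 - i) = i by omega,
    show (-1 : R) ^ (n - 1 - i) = (-1) ^ (n - 1) * (-1) ^ i by
      rw [← pow_add, show n - 1 + i = n - 1 - i + 2 * i by omega, pow_add, pow_mul]
      simp]
  ring

end InvPowTrunc

lemma mul_mem_span_pair_iff {R : Type*} [CommRing R] [IsDomain R] {x y f N w : R} {n c : ℕ}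
    (hx : Prime x) (hxy : ¬x ∣ y) (hN : x ^ n ∣ f * N - y ^ c) (g : R) :
    g * f ∈ Ideal.span {x ^ n, y ^ c * w} ↔ g ∈ Ideal.span {x ^ n, w * N} := by
  obtain ⟨P, hP⟩ := hN
  simp only [Ideal.mem_span_pair]
  constructor
  · rintro ⟨u, v, huv⟩
    have hdvd : x ^ n ∣ (g - v * (w * N)) * y ^ c :=
      ⟨u * N - g * P, by linear_combination -N * huv - g * hP⟩
    obtain ⟨s, hs⟩ := hx.pow_dvd_of_dvd_mul_right n (fun h => hxy (hx.dvd_of_dvd_pow h)) hdvd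
    exact ⟨s, v, by linear_combination -hs⟩
  · rintro ⟨u, v, huv⟩
    exact ⟨u * f + v * w * P, v, by linear_combination f * huv - v * w * hP⟩

lemma Ideal.span_pair_mul_left_unit {R : Type*} [CommRing R] {u : R} (hu : IsUnit u) (p q : R) :
    Ideal.span {p, u * q} = Ideal.span {p, q} := by
  rw [Ideal.span_insert, Ideal.span_singleton_mul_left_unit hu, ← Ideal.span_insert]

theorem stmt_13_general (d₁ d₂ a k : ℕ) (h12 : d₁ ≤ d₂) (hk : k = d₂ - d₁)
    (ha : 1 ≤ a) (hak : a ≤ k) :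
    let x : MvPolynomial (Fin 2) ℚ := X 0
    let y : MvPolynomial (Fin 2) ℚ := X 1
    let H : MvPolynomial (Fin 2) ℚ := y ^ (k - a + 1) * ∑ i ∈ range d₁,
      C ((-1 : ℚ) ^ i * (Nat.choose (d₁ + a - 2 - i) (a - 1))) * x ^ (d₁ - 1 - i) * y ^ i
    ∀ g : MvPolynomial (Fin 2) ℚ,
      g * (x + y) ^ a ∈ Ideal.span {x ^ d₁, y ^ d₂} ↔ g ∈ Ideal.span {x ^ d₁, H} := by
  intro x y H g
  obtain ⟨b, rfl⟩ : ∃ b, a = b + 1 := ⟨a - 1, by omega⟩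
  have hH : H = (-1) ^ (d₁ - 1) * (y ^ (k - (b + 1) + 1) * invPowTrunc x y b d₁) := by
    simp only [H, map_mul, map_pow, map_neg, map_one, map_natCast, Nat.add_sub_cancel,
      show d₁ + (b + 1) - 2 = d₁ + b - 1 by omega, sum_range_reflect_eq_invPowTrunc]
    ring
  have hy : y ^ d₂ = y ^ (b + d₁) * y ^ (k - (b + 1) + 1) := by
    rw [← pow_add]
    congr 1
    omega
  rw [hH, Ideal.span_pair_mul_left_unit (isUnit_neg_one.pow _), hy]
  exact mul_mem_span_pair_iff X_prime (by simp [y])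
    (pow_dvd_add_pow_mul_invPowTrunc_sub x y b d₁) g

theorem stmt_13 (d₁ d₂ a k : ℕ) (hd₁ : 2 ≤ d₁) (h12 : d₁ ≤ d₂) (hk : k = d₂ - d₁)
    (ha : 1 ≤ a) (hak : a ≤ k) :
    let x : MvPolynomial (Fin 2) ℚ := X 0
    let y : MvPolynomial (Fin 2) ℚ := X 1
    let H : MvPolynomial (Fin 2) ℚ := y ^ (k - a + 1) * ∑ i ∈ range d₁,
      C ((-1 : ℚ) ^ i * (Nat.choose (d₁ + a - 2 - i) (a - 1))) * x ^ (d₁ - 1 - i) * y ^ i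
    ∀ g : MvPolynomial (Fin 2) ℚ,
      g * (x + y) ^ a ∈ Ideal.span {x ^ d₁, y ^ d₂} ↔ g ∈ Ideal.span {x ^ d₁, H} :=
  stmt_13_general d₁ d₂ a k h12 hk ha hak
end

section
/- Let 2 ≤ d₁ ≤ d₂, k = d₂ − d₁, and 1 ≤ a < k, and set H_a = y^{k−a+1} Σ_{i=0}^{d₁−1} (-1)^i binom(d₁+a−2−i, a−1) x^{d₁−1−i} y^i in ℚ[x,y]. Then (x+y)·H_{a+1} ≡ H_a modulo the ideal (x^{d₁}). -/
open MvPolynomial Finset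

/-! Writing `T_{d,c} = ∑_{i<d} (-1)^i binom(d-1-i+c, c) x^{d-1-i} y^i`, we have `H_{c+1} = y^{k-c} T_{d₁,c}`.
Peeling off the `i = 0` term gives `T_{d+1,c} = binom(d+c, c) x^d - y T_{d,c}`, and with Pascal's rule
an induction on `d` yields `(x + y) T_{d,c+1} - y T_{d,c} = binom(d+c, c+1) x^d`. -/

section AltChooseSum

variable {R : Type*} [CommRing R]

def altChooseSum (d c : ℕ) (x y : R) : R :=
  ∑ i ∈ range d, (-1) ^ i * ((d - 1 - i + c).choose c : R) * x ^ (d - 1 - i) * y ^ i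

@[simp]
theorem altChooseSum_zero (c : ℕ) (x y : R) : altChooseSum 0 c x y = 0 := by
  simp [altChooseSum]

theorem altChooseSum_succ (d c : ℕ) (x y : R) :
    altChooseSum (d + 1) c x y = ((d + c).choose c : R) * x ^ d - y * altChooseSum d c x y := by
  rw [altChooseSum, altChooseSum, sum_range_succ', add_comm, sub_eq_add_neg, mul_sum, ← sum_neg_distrib]
  congr 1
  · simp
  · refine sum_congr rfl fun i hi => ?_
    rw [show d + 1 - 1 - (i + 1) = d - 1 - i by omega]
    ring

theorem add_mul_altChooseSum_succ_sub (d c : ℕ) (x y : R) :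
    (x + y) * altChooseSum d (c + 1) x y - y * altChooseSum d c x y =
      ((d + c).choose (c + 1) : R) * x ^ d := by
  induction d with
  | zero => simp
  | succ d ih =>
    rw [altChooseSum_succ, altChooseSum_succ, Nat.add_right_comm, ← Nat.add_assoc,
      Nat.choose_succ_succ, Nat.cast_add]
    linear_combination (-y) * ih

end AltChooseSum

theorem stmt_14_general (d₁ a k : ℕ)
    (ha : 1 ≤ a) (hak : a < k) :
    let x : MvPolynomial (Fin 2) ℚ := X 0
    let y : MvPolynomial (Fin 2) ℚ := X 1
    let H : ℕ → MvPolynomial (Fin 2) ℚ := fun b => y ^ (k - b + 1) * ∑ i ∈ range d₁,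
      C ((-1 : ℚ) ^ i * (Nat.choose (d₁ + b - 2 - i) (b - 1))) * x ^ (d₁ - 1 - i) * y ^ i
    (x + y) * H (a + 1) - H a ∈ Ideal.span {x ^ d₁} := by
  intro x y H
  have hH : ∀ c < k, H (c + 1) = y ^ (k - c) * altChooseSum d₁ c x y := by
    intro c hc
    simp only [H, altChooseSum, map_mul, map_pow, map_neg, map_one, map_natCast,
      Nat.add_sub_cancel, show k - (c + 1) + 1 = k - c by omega]
    refine congrArg _ (sum_congr rfl fun i hi => ?_)
    rw [show d₁ + (c + 1) - 2 - i = d₁ - 1 - i + c by grind]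
  obtain ⟨c, rfl⟩ : ∃ c, a = c + 1 := ⟨a - 1, by omega⟩
  have hdiff : (x + y) * H (c + 1 + 1) - H (c + 1) =
      y ^ (k - (c + 1)) * ((d₁ + c).choose (c + 1) : MvPolynomial (Fin 2) ℚ) * x ^ d₁ := by
    rw [hH _ hak, hH _ (by omega), show k - c = k - (c + 1) + 1 by omega]
    linear_combination y ^ (k - (c + 1)) * add_mul_altChooseSum_succ_sub d₁ c x y
  rw [hdiff]
  exact Ideal.mul_mem_left _ _ (Ideal.mem_span_singleton_self _)

theorem stmt_14 (d₁ d₂ a k : ℕ) (hd₁ : 2 ≤ d₁) (h12 : d₁ ≤ d₂) (hk : k = d₂ - d₁)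
    (ha : 1 ≤ a) (hak : a < k) :
    let x : MvPolynomial (Fin 2) ℚ := X 0
    let y : MvPolynomial (Fin 2) ℚ := X 1
    let H : ℕ → MvPolynomial (Fin 2) ℚ := fun b => y ^ (k - b + 1) * ∑ i ∈ range d₁,
      C ((-1 : ℚ) ^ i * (Nat.choose (d₁ + b - 2 - i) (b - 1))) * x ^ (d₁ - 1 - i) * y ^ i
    (x + y) * H (a + 1) - H a ∈ Ideal.span {x ^ d₁} :=
  stmt_14_general d₁ a k ha hak
end

section
/- In ℚ[x,y,z], let L = x + y + z, and let φ : ℚ[x,y,z] → ℚ[x,y] be the ring homomorphism fixing x, y and sending z to −(x+y). Suppose F·L = A x^{d₁} + B y^{d₂} + C z^{d₃} + D x^{a₁} y^{a₂} z^{a₃} is a homogeneous relation with 0 < a_j < d_j, and suppose φ(D) ∈ (x^{d₁−a₁}, y^{d₂−a₂}, (x+y)^{d₃−a₃}) in ℚ[x,y]. Then, assuming that multiplication by L has maximal rank on ℚ[x,y,z]/(x^{d₁}, y^{d₂}, z^{d₃}) in the relevant degree (WLP of the monomial complete intersection) and that deg F + 1 is at most the degree where injectivity of ×L holds, F ∈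 (x^{d₁}, y^{d₂}, z^{d₃}, x^{a₁} y^{a₂} z^{a₃}). -/
/-!
Since `z ≡ -(x + y)` modulo `L = x + y + z`, the kernel of `φ` is `(L)`, so the hypothesis on
`φ D` lifts to `D = j + L G` with `j ∈ (x^{d₁-a₁}, y^{d₂-a₂}, z^{d₃-a₃})`. Multiplying by the
monomial `m = x^{a₁} y^{a₂} z^{a₃}` sends `j` into `I = (x^{d₁}, y^{d₂}, z^{d₃})`, so the relation
becomes `(F - G m) L ∈ I`. Both `I` and `(m)` are monomial, hence homogeneous, ideals, so taking
degree-`deg F` components and applying injectivity of `×L` gives `F ∈ I + (m)`.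
-/

open MvPolynomial

attribute [local instance] MvPolynomial.gradedAlgebra

namespace MvPolynomial

section Homogeneous

variable {σ R : Type*} [CommSemiring R]

lemma homogeneousComponent_add_mul_of_isHomogeneous (n : ℕ) (p : MvPolynomial σ R)
    {q : MvPolynomial σ R} {m : ℕ} (hq : q.IsHomogeneous m) :
    homogeneousComponent (n + m) (p * q) = homogeneousComponent n p * q := by
  rw [← decomposition.decompose'_apply, ← decomposition.decompose'_apply]
  exact DirectSum.coe_decompose_mul_add_of_right_mem (homogeneousSubmodule σ R)
    (a := p) (i := n) ((mem_homogeneousSubmodule m q).2 hq)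

lemma isHomogeneous_span {S : Set (MvPolynomial σ R)} (hS : ∀ p ∈ S, ∃ n, p.IsHomogeneous n) :
    (Ideal.span S).IsHomogeneous (homogeneousSubmodule σ R) :=
  Ideal.homogeneous_span _ S hS

lemma homogeneousComponent_mul_mem {I : Ideal (MvPolynomial σ R)}
    (hI : I.IsHomogeneous (homogeneousSubmodule σ R)) {p q : MvPolynomial σ R} {m : ℕ}
    (hq : q.IsHomogeneous m) (hpq : p * q ∈ I) (n : ℕ) :
    homogeneousComponent n p * q ∈ I := by
  rw [← homogeneousComponent_add_mul_of_isHomogeneous n p hq]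
  exact homogeneousComponent_mem_of_mem hI hpq _

end Homogeneous

lemma sub_aeval_mem_of_X_sub_mem {ι R : Type*} [CommRing R] {I : Ideal (MvPolynomial ι R)}
    {f : ι → MvPolynomial ι R} (hf : ∀ i, X i - f i ∈ I) (p : MvPolynomial ι R) :
    p - aeval f p ∈ I := by
  have h : (Ideal.Quotient.mkₐ R I).comp (aeval f) = Ideal.Quotient.mkₐ R I :=
    algHom_ext fun i => by
      simpa [Ideal.Quotient.mk_eq_mk_iff_sub_mem, ← sub_eq_neg_add] using I.neg_mem (hf i)
  exact (Ideal.Quotient.mk_eq_mk_iff_sub_mem _ _).1 (DFunLike.congr_fun h p).symm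

section EliminateZ

variable {R : Type*} [CommRing R]

lemma ker_aeval_eq_span_X_add_X_add_X :
    RingHom.ker (aeval ![X 0, X 1, -(X 0 + X 1)] :
        MvPolynomial (Fin 3) R →ₐ[R] MvPolynomial (Fin 2) R) =
      Ideal.span {X 0 + X 1 + X 2} := by
  refine le_antisymm (fun p hp => ?_) ?_
  · set s : MvPolynomial (Fin 2) R →ₐ[R] MvPolynomial (Fin 3) R := aeval ![X 0, X 1]
    have h := sub_aeval_mem_of_X_sub_mem (I := Ideal.span {X 0 + X 1 + X 2})
      (f := fun i => s (![X 0, X 1, -(X 0 + X 1)] i)) (fun i => ?_) p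
    · rwa [← comp_aeval_apply, RingHom.mem_ker.1 hp, map_zero, sub_zero] at h
    fin_cases i
    · simp [s]
    · simp [s]
    · refine Ideal.subset_span (Set.mem_singleton_of_eq ?_)
      simp only [s, Fin.reduceFinMk, Matrix.cons_val, map_neg, map_add, aeval_X]
      ring
  · rw [Ideal.span_le, Set.singleton_subset_iff]
    simp

lemma aeval_neg_add_surjective :
    Function.Surjective (aeval ![X 0, X 1, -(X 0 + X 1)] :
        MvPolynomial (Fin 3) R →ₐ[R] MvPolynomial (Fin 2) R) := by
  have h : (aeval ![X 0, X 1, -(X 0 + X 1)]).comp (aeval ![X 0, X 1]) =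
      AlgHom.id R (MvPolynomial (Fin 2) R) := by
    ext i : 1
    fin_cases i <;> simp
  exact fun q => ⟨aeval ![X 0, X 1] q, DFunLike.congr_fun h q⟩

lemma exists_sub_mul_mem_of_aeval_mem {e₁ e₂ e₃ : ℕ} {D : MvPolynomial (Fin 3) R}
    (hD : aeval ![X 0, X 1, -(X 0 + X 1)] D ∈
      Ideal.span {(X 0 : MvPolynomial (Fin 2) R) ^ e₁, X 1 ^ e₂, (X 0 + X 1) ^ e₃}) :
    ∃ G, D - (X 0 + X 1 + X 2) * G ∈ Ideal.span {X 0 ^ e₁, X 1 ^ e₂, X 2 ^ e₃} := by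
  set φ : MvPolynomial (Fin 3) R →ₐ[R] MvPolynomial (Fin 2) R :=
    aeval ![X 0, X 1, -(X 0 + X 1)]
  set J : Ideal (MvPolynomial (Fin 3) R) := Ideal.span {X 0 ^ e₁, X 1 ^ e₂, X 2 ^ e₃}
  have hmap : φ D ∈ J.map φ := by
    refine Ideal.span_le.2 ?_ hD
    have hJ : ∀ q ∈ J, φ q ∈ J.map φ := fun q => Ideal.mem_map_of_mem φ
    rintro _ (rfl | rfl | rfl)
    · simpa [φ] using hJ (X 0 ^ e₁) (Ideal.subset_span (by simp))
    · simpa [φ] using hJ (X 1 ^ e₂) (Ideal.subset_span (by simp))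
    · have hz : φ ((-1) ^ e₃ * X 2 ^ e₃) = (X 0 + X 1) ^ e₃ := by
        rw [map_mul, map_pow, map_pow, map_neg, map_one, ← mul_pow]
        simp [φ]
      rw [← hz]
      exact hJ _ (Ideal.mul_mem_left _ _ (Ideal.subset_span (by simp)))
  rw [← Ideal.mem_comap, Ideal.comap_map_of_surjective' φ aeval_neg_add_surjective,
    ker_aeval_eq_span_X_add_X_add_X, Submodule.mem_sup] at hmap
  obtain ⟨j, hj, k, hk, rfl⟩ := hmap
  obtain ⟨G, rfl⟩ := Ideal.mem_span_singleton.1 hk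
  exact ⟨G, by rwa [add_sub_cancel_right]⟩

end EliminateZ

lemma mul_monomial_mem_span_X_pow {R : Type*} [CommSemiring R] {d₁ d₂ d₃ a₁ a₂ a₃ : ℕ}
    (h₁ : a₁ ≤ d₁) (h₂ : a₂ ≤ d₂) (h₃ : a₃ ≤ d₃) {j : MvPolynomial (Fin 3) R}
    (hj : j ∈ Ideal.span {X 0 ^ (d₁ - a₁), X 1 ^ (d₂ - a₂), X 2 ^ (d₃ - a₃)}) :
    j * (X 0 ^ a₁ * X 1 ^ a₂ * X 2 ^ a₃) ∈ Ideal.span {X 0 ^ d₁, X 1 ^ d₂, X 2 ^ d₃} := by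
  induction hj using Submodule.span_induction with
  | mem q hq =>
    rcases hq with rfl | rfl | rfl
    · refine Ideal.mem_of_dvd _ ?_ (Ideal.subset_span (Set.mem_insert (X 0 ^ d₁) _))
      rw [← pow_sub_mul_pow _ h₁]
      exact mul_dvd_mul_left _ (dvd_mul_of_dvd_left (dvd_mul_right _ _) _)
    · refine Ideal.mem_of_dvd _ ?_
        (Ideal.subset_span (Set.mem_insert_of_mem _ (Set.mem_insert (X 1 ^ d₂) _)))
      rw [← pow_sub_mul_pow _ h₂]
      exact mul_dvd_mul_left _ (dvd_mul_of_dvd_left (dvd_mul_left _ _) _)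
    · refine Ideal.mem_of_dvd _ ?_ (Ideal.subset_span
        (Set.mem_insert_of_mem _ (Set.mem_insert_of_mem _ (Set.mem_singleton (X 2 ^ d₃)))))
      rw [← pow_sub_mul_pow _ h₃]
      exact mul_dvd_mul_left _ (dvd_mul_left _ _)
  | zero => simp
  | add p q _ _ hp hq => rw [add_mul]; exact add_mem hp hq
  | smul r q _ hq => rw [smul_eq_mul, mul_assoc]; exact Ideal.mul_mem_left _ _ hq

end MvPolynomial

theorem stmt_16_general (d₁ d₂ d₃ a₁ a₂ a₃ : ℕ)
    (h₁' : a₁ < d₁) (h₂' : a₂ < d₂) (h₃' : a₃ < d₃)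
    (F A B C D : MvPolynomial (Fin 3) ℚ) (dF : ℕ)
    (hF : MvPolynomial.IsHomogeneous F dF)
    (L : MvPolynomial (Fin 3) ℚ) (hL : L = X 0 + X 1 + X 2)
    (hrel : F * L = A * X 0 ^ d₁ + B * X 1 ^ d₂ + C * X 2 ^ d₃
      + D * X 0 ^ a₁ * X 1 ^ a₂ * X 2 ^ a₃)
    (φ : MvPolynomial (Fin 3) ℚ →ₐ[ℚ] MvPolynomial (Fin 2) ℚ)
    (hφ : φ = MvPolynomial.aeval ![X 0, X 1, -(X 0 + X 1)])
    (hDmem : φ D ∈ Ideal.span {(X 0 : MvPolynomial (Fin 2) ℚ) ^ (d₁ - a₁),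
      (X 1) ^ (d₂ - a₂), (X 0 + X 1) ^ (d₃ - a₃)})
    -- WLP (injectivity of ×L) for the monomial complete intersection in degree dF
    (hWLP : ∀ G : MvPolynomial (Fin 3) ℚ, MvPolynomial.IsHomogeneous G dF →
      G * L ∈ Ideal.span {(X 0 : MvPolynomial (Fin 3) ℚ) ^ d₁, (X 1) ^ d₂, (X 2) ^ d₃} →
      G ∈ Ideal.span {(X 0 : MvPolynomial (Fin 3) ℚ) ^ d₁, (X 1) ^ d₂, (X 2) ^ d₃}) :
    F ∈ Ideal.span {(X 0 : MvPolynomial (Fin 3) ℚ) ^ d₁, (X 1) ^ d₂, (X 2) ^ d₃,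
      X 0 ^ a₁ * X 1 ^ a₂ * X 2 ^ a₃} := by
  subst hL hφ
  set m : MvPolynomial (Fin 3) ℚ := X 0 ^ a₁ * X 1 ^ a₂ * X 2 ^ a₃
  set I : Ideal (MvPolynomial (Fin 3) ℚ) := Ideal.span {X 0 ^ d₁, X 1 ^ d₂, X 2 ^ d₃}
  obtain ⟨G, hG⟩ := exists_sub_mul_mem_of_aeval_mem hDmem
  have hFG : (F - G * m) * (X 0 + X 1 + X 2) ∈ I := by
    have hsplit : (F - G * m) * (X 0 + X 1 + X 2) =
        A * X 0 ^ d₁ + B * X 1 ^ d₂ + C * X 2 ^ d₃ + (D - (X 0 + X 1 + X 2) * G) * m := by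
      linear_combination hrel
    rw [hsplit]
    refine add_mem (add_mem (add_mem ?_ ?_) ?_)
      (mul_monomial_mem_span_X_pow h₁'.le h₂'.le h₃'.le hG) <;>
      exact Ideal.mul_mem_left _ _ (Ideal.subset_span (by simp))
  have hI : I.IsHomogeneous (homogeneousSubmodule (Fin 3) ℚ) :=
    isHomogeneous_span (by rintro _ (rfl | rfl | rfl) <;> exact ⟨_, isHomogeneous_X_pow _ _⟩)
  have hm : (Ideal.span {m}).IsHomogeneous (homogeneousSubmodule (Fin 3) ℚ) :=
    isHomogeneous_span (by
      rintro _ rfl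
      exact ⟨_, ((isHomogeneous_X_pow _ _).mul (isHomogeneous_X_pow _ _)).mul
        (isHomogeneous_X_pow _ _)⟩)
  have hL : (X 0 + X 1 + X 2 : MvPolynomial (Fin 3) ℚ).IsHomogeneous 1 :=
    ((isHomogeneous_X _ _).add (isHomogeneous_X _ _)).add (isHomogeneous_X _ _)
  have h₁ : homogeneousComponent dF (F - G * m) ∈ I :=
    hWLP _ (homogeneousComponent_isHomogeneous dF _) (homogeneousComponent_mul_mem hI hL hFG dF)
  have h₂ : homogeneousComponent dF (G * m) ∈ Ideal.span {m} :=
    homogeneousComponent_mem_of_mem hm (Ideal.mul_mem_left _ G (Ideal.subset_span rfl)) dF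
  rw [← homogeneousComponent_eq_self hF, ← sub_add_cancel F (G * m), map_add]
  refine add_mem (Ideal.span_mono ?_ h₁) (Ideal.span_mono ?_ h₂) <;> intro p <;>
    simp only [Set.mem_insert_iff, Set.mem_singleton_iff] <;> tauto

/-- Lemma 3.2(a): if `F·L = A x^{d₁} + B y^{d₂} + C z^{d₃} + D x^{a₁}y^{a₂}z^{a₃}` is a
homogeneous relation and `φ(D) ∈ (x^{d₁-a₁}, y^{d₂-a₂}, (x+y)^{d₃-a₃})`, then (given WLP of
the monomial complete intersection in the relevant degree) `F ∈ I`. -/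
theorem stmt_16 (d₁ d₂ d₃ a₁ a₂ a₃ : ℕ)
    (h₁ : 0 < a₁) (h₁' : a₁ < d₁) (h₂ : 0 < a₂) (h₂' : a₂ < d₂) (h₃ : 0 < a₃) (h₃' : a₃ < d₃)
    (F A B C D : MvPolynomial (Fin 3) ℚ) (dF : ℕ)
    (hF : MvPolynomial.IsHomogeneous F dF)
    (hA : MvPolynomial.IsHomogeneous A (dF + 1 - d₁))
    (hB : MvPolynomial.IsHomogeneous B (dF + 1 - d₂))
    (hC : MvPolynomial.IsHomogeneous C (dF + 1 - d₃))
    (hD : MvPolynomial.IsHomogeneous D (dF + 1 - (a₁ + a₂ + a₃)))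
    (L : MvPolynomial (Fin 3) ℚ) (hL : L = X 0 + X 1 + X 2)
    (hrel : F * L = A * X 0 ^ d₁ + B * X 1 ^ d₂ + C * X 2 ^ d₃
      + D * X 0 ^ a₁ * X 1 ^ a₂ * X 2 ^ a₃)
    (φ : MvPolynomial (Fin 3) ℚ →ₐ[ℚ] MvPolynomial (Fin 2) ℚ)
    (hφ : φ = MvPolynomial.aeval ![X 0, X 1, -(X 0 + X 1)])
    (hDmem : φ D ∈ Ideal.span {(X 0 : MvPolynomial (Fin 2) ℚ) ^ (d₁ - a₁),
      (X 1) ^ (d₂ - a₂), (X 0 + X 1) ^ (d₃ - a₃)})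
    -- WLP (injectivity of ×L) for the monomial complete intersection in degree dF
    (hWLP : ∀ G : MvPolynomial (Fin 3) ℚ, MvPolynomial.IsHomogeneous G dF →
      G * L ∈ Ideal.span {(X 0 : MvPolynomial (Fin 3) ℚ) ^ d₁, (X 1) ^ d₂, (X 2) ^ d₃} →
      G ∈ Ideal.span {(X 0 : MvPolynomial (Fin 3) ℚ) ^ d₁, (X 1) ^ d₂, (X 2) ^ d₃}) :
    F ∈ Ideal.span {(X 0 : MvPolynomial (Fin 3) ℚ) ^ d₁, (X 1) ^ d₂, (X 2) ^ d₃,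
      X 0 ^ a₁ * X 1 ^ a₂ * X 2 ^ a₃} :=
  stmt_16_general d₁ d₂ d₃ a₁ a₂ a₃ h₁' h₂' h₃' F A B C D dF hF L hL hrel φ hφ hDmem hWLP
end

section
/- Let S and P be positive integers with S ≥ 2 satisfying S³ − 4S² + 3S = (4S − 10)·P, and suppose P = a₁a₂, S = a₁ + a₂ for positive integers 2 ≤ a₁ ≤ a₂. Then (a₁, a₂) = (3, 7). -/
/-! Multiplying the equation by 8 and reducing modulo `2S - 5` (where `2S ≡ 5`) shows that
`2S - 5` divides `15`; as `S = a₁ + a₂ ≥ 4`, this leaves `S ∈ {4, 5, 10}`. The bound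
`P = a₁a₂ ≥ 2S - 4`, i.e. `(a₁ - 2)(a₂ - 2) ≥ 0`, rules out `S = 4` and `S = 5`, and `S = 10`
forces `P = 21`, whose only factorisation with sum `10` is `3 · 7`. -/

theorem two_mul_sub_five_dvd_fifteen {S P : ℤ}
    (h : S ^ 3 - 4 * S ^ 2 + 3 * S = (4 * S - 10) * P) : 2 * S - 5 ∣ 15 :=
  ⟨4 * S ^ 2 - 6 * S - 3 - 16 * P, by linear_combination -8 * h⟩

theorem eq_of_two_mul_sub_five_dvd_fifteen {S : ℤ} (hS : 3 ≤ S) (h : 2 * S - 5 ∣ 15) :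
    S = 3 ∨ S = 4 ∨ S = 5 ∨ S = 10 := by
  have hS10 : S ≤ 10 := by
    have := Int.le_of_dvd (by norm_num) h
    omega
  interval_cases S <;> omega

theorem two_mul_add_sub_four_le_mul {a b : ℤ} (ha : 2 ≤ a) (hb : 2 ≤ b) :
    2 * (a + b) - 4 ≤ a * b := by
  nlinarith [mul_nonneg (sub_nonneg.2 ha) (sub_nonneg.2 hb)]

theorem eq_three_and_eq_seven_of_add_eq_of_mul_eq {a b : ℤ} (hab : a ≤ b)
    (hsum : a + b = 10) (hprod : a * b = 21) : a = 3 ∧ b = 7 := by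
  have hroots : (a - 3) * (a - 7) = 0 := by linear_combination a * hsum - hprod
  rcases mul_eq_zero.1 hroots with h | h <;> omega

theorem stmt_17_general (S P a₁ a₂ : ℤ)
    (heq : S ^ 3 - 4 * S ^ 2 + 3 * S = (4 * S - 10) * P)
    (ha₁ : 2 ≤ a₁) (ha₁₂ : a₁ ≤ a₂) (hSsum : S = a₁ + a₂) (hPprod : P = a₁ * a₂) :
    a₁ = 3 ∧ a₂ = 7 := by
  have hPS : 2 * S - 4 ≤ P := by
    rw [hSsum, hPprod]
    exact two_mul_add_sub_four_le_mul ha₁ (ha₁.trans ha₁₂)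
  rcases eq_of_two_mul_sub_five_dvd_fifteen (by omega) (two_mul_sub_five_dvd_fifteen heq)
    with rfl | rfl | rfl | rfl
  · omega
  · omega
  · omega
  · exact eq_three_and_eq_seven_of_add_eq_of_mul_eq ha₁₂ hSsum.symm (by omega)

theorem stmt_17 (S P a₁ a₂ : ℤ) (hS : 2 ≤ S) (hP : 0 < P)
    (heq : S ^ 3 - 4 * S ^ 2 + 3 * S = (4 * S - 10) * P)
    (ha₁ : 2 ≤ a₁) (ha₁₂ : a₁ ≤ a₂) (hSsum : S = a₁ + a₂) (hPprod : P = a₁ * a₂) :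
    a₁ = 3 ∧ a₂ = 7 :=
  stmt_17_general S P a₁ a₂ heq ha₁ ha₁₂ hSsum hPprod
end
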